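/- Let (F_η)_{η<λ} be a decreasing continuous transfinite sequence of closed sets with F₀ = X, and set f_η = χ_{F_η}. Then for every even θ ≤ λ, the alternating sum Σ*_{η<θ} (−1)^η f_η equals the characteristic function of ⋃_{η<θ, η even} (F_η \ F_{η+1}) (where F_η = ∅ for η ≥ λ). -/

import Mathlib

open Set Filter Topology

noncomputable section

/-- Oscillation of `f` at `x` restricted to `F`. -/
def osc {X : Type*} [TopologicalSpace X] (f : X → ℝ) (x : X) (F : Set X) : ENNReal :=
  ⨅ (U : Set X) (_ : IsOpen U) (_ : x ∈ U),
    ⨆ (y) (_ : y ∈ U ∩ F) (z) (_ : z ∈ U ∩ F), ENNReal.ofReal |f y - f z|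

/-- Oscillation derivative. -/
def oscDeriv {X : Type*} [TopologicalSpace X] (f : X → ℝ) (ε : ℝ) (F : Set X) : Set X :=
  {x ∈ F | ENNReal.ofReal ε ≤ osc f x F}

/-- Iterated derivatives of a set operation. -/
def iterD {X : Type*} (D : Set X → Set X) (F : Set X) (o : Ordinal.{0}) : Set X :=
  Ordinal.limitRecOn o F (fun _ ih => D ih) (fun o _ ih => ⋂ (η : Ordinal.{0}) (h : η < o), ih η h)

open Classical in
/-- Rank of a derivative: least `θ` with `D^θ(X) = ∅`, or `ω₁` if there is none. -/
def rkD {X : Type*} (D : Set X → Set X) : Ordinal.{0} :=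
  if ∃ θ, iterD D Set.univ θ = ∅ then sInf {θ | iterD D Set.univ θ = ∅}
  else (Cardinal.aleph 1).ord

/-- Oscillation rank. -/
def betaRank {X : Type*} [TopologicalSpace X] (f : X → ℝ) : Ordinal.{0} :=
  ⨆ ε : {ε : ℝ // 0 < ε}, rkD (oscDeriv f ε.1)

/-- Oscillation of a sequence of functions. -/
def oscSeq {X : Type*} [TopologicalSpace X] (f : ℕ → X → ℝ) (x : X) (F : Set X) : ENNReal :=
  ⨅ (U : Set X) (_ : IsOpen U) (_ : x ∈ U) (N : ℕ),
    ⨆ (m) (_ : N ≤ m) (n) (_ : N ≤ n) (y) (_ : y ∈ U ∩ F), ENNReal.ofReal |f m y - f n y|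

def oscSeqDeriv {X : Type*} [TopologicalSpace X] (f : ℕ → X → ℝ) (ε : ℝ) (F : Set X) : Set X :=
  {x ∈ F | ENNReal.ofReal ε ≤ oscSeq f x F}

/-- Convergence rank of a sequence. -/
def gammaRank {X : Type*} [TopologicalSpace X] (f : ℕ → X → ℝ) : Ordinal.{0} :=
  ⨆ ε : {ε : ℝ // 0 < ε}, rkD (oscSeqDeriv f ε.1)

/-- Alternating transfinite sum `Σ*_{η<θ} (−1)^η f_η`. -/
def altSum {X : Type*} (f : Ordinal.{0} → X → ℝ) (θ : Ordinal.{0}) : X → ℝ :=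
  Ordinal.limitRecOn θ (fun _ => 0)
    (fun η ih x => ih x + (if η % 2 = 0 then f η x else - f η x))
    (fun θ _ ih x => sSup {y | ∃ ζ, ∃ h : ζ < θ, ζ % 2 = 0 ∧ ih ζ h x = y})

/-- The `ξ`-th additive Borel class. -/
def Sigma0 {X : Type*} [TopologicalSpace X] (ξ : Ordinal.{0}) : Set (Set X) :=
  {s | IsOpen s} ∪
  {s | ∃ g : ℕ → Set X,
        (∀ n, ∃ η, ∃ _ : η < ξ, 1 ≤ η ∧ (g n)ᶜ ∈ Sigma0 η) ∧ s = ⋃ n, g n}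
termination_by ξ

/-- Baire class `ξ` functions. -/
def BaireClass {X : Type*} [TopologicalSpace X] (ξ : Ordinal.{0}) (f : X → ℝ) : Prop :=
  (ξ = 0 ∧ Continuous f) ∨
  (1 ≤ ξ ∧ ∃ g : ℕ → X → ℝ,
      (∀ n, ∃ η, ∃ _ : η < ξ, BaireClass η (g n)) ∧
      ∀ x, Tendsto (fun n => g n x) atTop (𝓝 (f x)))
termination_by ξ

/-!
Induction over the even ordinals, which are `0`, limits, and `ν + 2` with `ν` even. Two
consecutive terms contribute `χ F_ν - χ F_{ν+1} = χ (F_ν \ F_{ν+1})`, and this layer is disjoint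
from the earlier even layers, which lie outside `F_ν`. At a limit the partial sums are the
indicators of an increasing family of sets, so their supremum is the indicator of the union.
-/

namespace Ordinal

theorem add_one_add_one (o : Ordinal) : o + 1 + 1 = o + 2 := by
  rw [add_assoc, one_add_one_eq_two]

theorem mod_two_eq_zero_or_one (o : Ordinal) : o % 2 = 0 ∨ o % 2 = 1 :=
  Order.le_one_iff.1 (Order.lt_two_iff.1 (mod_lt o two_ne_zero))

theorem add_one_mod_two_eq_zero_iff {o : Ordinal} : (o + 1) % 2 = 0 ↔ o % 2 ≠ 0 := by
  have h : (o + 1) % 2 = (o % 2 + 1) % 2 := by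
    conv_lhs => rw [← div_add_mod o 2, add_assoc, mul_add_mod_self]
  rcases mod_two_eq_zero_or_one o with ho | ho <;> norm_num [h, ho]

theorem add_two_mod_two_eq_zero_iff {o : Ordinal} : (o + 2) % 2 = 0 ↔ o % 2 = 0 := by
  rw [← add_one_add_one, add_one_mod_two_eq_zero_iff, Ne, add_one_mod_two_eq_zero_iff, not_not]

theorem mod_two_eq_zero_of_isSuccLimit {o : Ordinal} (h : Order.IsSuccLimit o) : o % 2 = 0 :=
  mod_eq_zero_of_dvd ⟨o, (mul_omega0_dvd two_pos (natCast_lt_omega0 2)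
    (isSuccPrelimit_iff_omega0_dvd.1 h.isSuccPrelimit)).symm⟩

theorem eq_zero_or_isSuccLimit_or_eq_add_two_of_mod_two_eq_zero {o : Ordinal} (ho : o % 2 = 0) :
    o = 0 ∨ Order.IsSuccLimit o ∨ ∃ ν, ν % 2 = 0 ∧ o = ν + 2 := by
  rcases zero_or_succ_or_isSuccLimit o with rfl | ⟨μ, rfl⟩ | h
  · exact Or.inl rfl
  · rw [Order.succ_eq_add_one, add_one_mod_two_eq_zero_iff] at ho
    rcases zero_or_succ_or_isSuccLimit μ with rfl | ⟨ν, rfl⟩ | h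
    · simp at ho
    · rw [Order.succ_eq_add_one, Ne, add_one_mod_two_eq_zero_iff, not_not] at ho
      refine Or.inr (Or.inr ⟨ν, ho, ?_⟩)
      rw [Order.succ_eq_add_one, Order.succ_eq_add_one, add_one_add_one]
    · exact absurd (mod_two_eq_zero_of_isSuccLimit h) ho
  · exact Or.inr (Or.inl h)

end Ordinal

section AltSum

variable {X : Type*} (f : Ordinal.{0} → X → ℝ) (x : X)

theorem altSum_zero : altSum f 0 x = 0 := by
  rw [altSum, Ordinal.limitRecOn_zero]

theorem altSum_add_one (θ : Ordinal.{0}) :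
    altSum f (θ + 1) x = altSum f θ x + if θ % 2 = 0 then f θ x else -f θ x := by
  rw [altSum, Ordinal.limitRecOn_add_one]
  rfl

theorem altSum_add_two {θ : Ordinal.{0}} (hθ : θ % 2 = 0) :
    altSum f (θ + 2) x = altSum f θ x + f θ x - f (θ + 1) x := by
  have hθ' : (θ + 1) % 2 ≠ 0 := by simpa [Ordinal.add_one_mod_two_eq_zero_iff] using hθ
  rw [← Ordinal.add_one_add_one, altSum_add_one, altSum_add_one, if_pos hθ, if_neg hθ',
    sub_eq_add_neg]

theorem altSum_of_isSuccLimit {θ : Ordinal.{0}} (h : Order.IsSuccLimit θ) :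
    altSum f θ x = sSup ((altSum f · x) '' {ζ | ζ < θ ∧ ζ % 2 = 0}) := by
  rw [altSum, Ordinal.limitRecOn_limit _ _ _ _ h]
  congr 1
  ext y
  simp only [Set.mem_image, Set.mem_ofPred_eq, and_assoc, exists_prop]
  rfl

end AltSum

theorem csSup_image_indicator_one {ι α : Type*} {I : Set ι} (hI : I.Nonempty) (s : ι → Set α)
    (x : α) :
    sSup ((fun i => (s i).indicator (1 : α → ℝ) x) '' I) = (⋃ i ∈ I, s i).indicator 1 x := by
  by_cases hx : x ∈ ⋃ i ∈ I, s i
  · obtain ⟨i, hi, hxi⟩ := Set.mem_iUnion₂.1 hx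
    rw [Set.indicator_of_mem hx]
    refine IsGreatest.csSup_eq ⟨⟨i, hi, Set.indicator_of_mem hxi _⟩, ?_⟩
    rintro _ ⟨j, -, rfl⟩
    exact Set.indicator_le_self' (fun _ _ => zero_le_one) x
  · have hzero : ∀ i ∈ I, (s i).indicator (1 : α → ℝ) x = 0 := fun i hi =>
      Set.indicator_of_notMem (fun hxi => hx (Set.mem_biUnion hi hxi)) _
    rw [Set.image_congr hzero, hI.image_const, csSup_singleton, Set.indicator_of_notMem hx]

section EvenLayers

variable {X : Type*} (G : Ordinal → Set X)

def evenLayers (θ : Ordinal) : Set X :=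
  ⋃ (η) (_ : η < θ) (_ : η % 2 = 0), G η \ G (η + 1)

theorem mem_evenLayers {θ : Ordinal} {x : X} :
    x ∈ evenLayers G θ ↔ ∃ η < θ, η % 2 = 0 ∧ x ∈ G η ∧ x ∉ G (η + 1) := by
  simp only [evenLayers, Set.mem_iUnion, Set.mem_sdiff, exists_prop]

theorem evenLayers_zero : evenLayers G 0 = ∅ := by
  simp [evenLayers]

theorem evenLayers_mono : Monotone (evenLayers G) := fun _ _ hθ =>
  Set.biUnion_mono (fun _ hη => lt_of_lt_of_le hη hθ) fun _ _ => subset_rfl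

variable {G}

theorem disjoint_evenLayers_self (hG : Antitone G) (θ : Ordinal) :
    Disjoint (evenLayers G θ) (G θ) := by
  refine Set.disjoint_left.2 fun x hx hxθ => ?_
  obtain ⟨η, hη, -, -, hxη⟩ := (mem_evenLayers G).1 hx
  exact hxη (hG (Order.add_one_le_of_lt hη) hxθ)

theorem evenLayers_add_two {ν : Ordinal} (hν : ν % 2 = 0) :
    evenLayers G (ν + 2) = evenLayers G ν ∪ (G ν \ G (ν + 1)) := by
  have hlt : ∀ {η}, η % 2 = 0 → (η < ν + 2 ↔ η < ν ∨ η = ν) := fun hη => by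
    rw [← Ordinal.add_one_add_one, Order.lt_add_one_iff, le_iff_lt_or_eq, Order.lt_add_one_iff,
      le_iff_lt_or_eq, or_iff_left]
    rintro rfl
    exact Ordinal.add_one_mod_two_eq_zero_iff.1 hη hν
  ext x
  simp only [mem_evenLayers, Set.mem_union, Set.mem_sdiff]
  constructor
  · rintro ⟨η, hη, hηe, hx⟩
    rcases (hlt hηe).1 hη with hη | rfl
    exacts [Or.inl ⟨η, hη, hηe, hx⟩, Or.inr hx]
  · rintro (⟨η, hη, hηe, hx⟩ | hx)
    exacts [⟨η, (hlt hηe).2 (Or.inl hη), hηe, hx⟩, ⟨ν, (hlt hν).2 (Or.inr rfl), hν, hx⟩]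

theorem indicator_evenLayers_add_two (hG : Antitone G) {ν : Ordinal} (hν : ν % 2 = 0) (x : X) :
    (evenLayers G (ν + 2)).indicator (1 : X → ℝ) x =
      (evenLayers G ν).indicator 1 x + (G ν).indicator 1 x - (G (ν + 1)).indicator 1 x := by
  have hdisj : Disjoint (evenLayers G ν) (G ν \ G (ν + 1)) :=
    (disjoint_evenLayers_self hG ν).mono_right Set.sdiff_subset
  rw [evenLayers_add_two hν, Set.indicator_union_of_disjoint hdisj,
    Set.indicator_sdiff (hG (lt_add_one ν).le), add_sub_assoc]
  rfl

theorem biUnion_evenLayers_of_isSuccLimit {θ : Ordinal} (h : Order.IsSuccLimit θ) :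
    ⋃ ζ ∈ {ζ | ζ < θ ∧ ζ % 2 = 0}, evenLayers G ζ = evenLayers G θ := by
  refine subset_antisymm (Set.iUnion₂_subset fun ζ hζ => evenLayers_mono G hζ.1.le) fun x hx => ?_
  obtain ⟨η, hη, hηe, hx⟩ := (mem_evenLayers G).1 hx
  have hη2 : η + 2 < θ := by
    rw [← Ordinal.add_one_add_one]
    exact h.add_one_lt (h.add_one_lt hη)
  exact Set.mem_biUnion ⟨hη2, Ordinal.add_two_mod_two_eq_zero_iff.2 hηe⟩
    ((mem_evenLayers G).2 ⟨η, lt_add_of_pos_right η two_pos, hηe, hx⟩)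

end EvenLayers

theorem altSum_indicator_eq_indicator_evenLayers {X : Type*} {G : Ordinal.{0} → Set X}
    (hG : Antitone G) {θ : Ordinal.{0}} (hθ : θ % 2 = 0) (x : X) :
    altSum (fun η => (G η).indicator 1) θ x = (evenLayers G θ).indicator 1 x := by
  induction θ using WellFoundedLT.induction with
  | _ θ ih =>
  rcases Ordinal.eq_zero_or_isSuccLimit_or_eq_add_two_of_mod_two_eq_zero hθ with
    rfl | hlim | ⟨ν, hν, rfl⟩
  · rw [altSum_zero, evenLayers_zero, Set.indicator_empty]
  · have hne : {ζ : Ordinal | ζ < θ ∧ ζ % 2 = 0}.Nonempty := ⟨0, hlim.bot_lt, Ordinal.zero_mod 2⟩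
    rw [altSum_of_isSuccLimit _ _ hlim, ← biUnion_evenLayers_of_isSuccLimit hlim,
      ← csSup_image_indicator_one hne]
    exact congrArg sSup (Set.image_congr fun ζ hζ => ih ζ hζ.1 hζ.2)
  · rw [altSum_add_two _ _ hν, ih ν (lt_add_of_pos_right ν two_pos) hν,
      indicator_evenLayers_add_two hG hν]

theorem stmt11_general {X : Type*}
    (lam : Ordinal.{0}) (F : Ordinal.{0} → Set X)
    (hdec : ∀ η ζ : Ordinal.{0}, η ≤ ζ → ζ < lam → F ζ ⊆ F η)
    (Fe : Ordinal.{0} → Set X)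
    (hFe : Fe = fun η => if η < lam then F η else ∅)
    (θ : Ordinal.{0}) (hθe : θ % 2 = 0) (x : X) :
    altSum (fun η => (Fe η).indicator fun _ => (1 : ℝ)) θ x =
      Set.indicator (⋃ (η : Ordinal.{0}) (_ : η < θ) (_ : η % 2 = 0),
        Fe η \ Fe (η + 1)) (fun _ => (1 : ℝ)) x := by
  have hanti : Antitone Fe := fun η ζ hle => by
    subst hFe
    by_cases hζ : ζ < lam
    · simpa only [if_pos hζ, if_pos (hle.trans_lt hζ)] using hdec η ζ hle hζ
    · simp only [if_neg hζ, Set.empty_subset]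
  exact altSum_indicator_eq_indicator_evenLayers hanti hθe x

theorem stmt11 {X : Type*} [TopologicalSpace X]
    (lam : Ordinal.{0}) (F : Ordinal.{0} → Set X)
    (hcl : ∀ η : Ordinal.{0}, η < lam → IsClosed (F η))
    (hdec : ∀ η ζ : Ordinal.{0}, η ≤ ζ → ζ < lam → F ζ ⊆ F η)
    (hcont : ∀ θ : Ordinal.{0}, θ < lam → Order.IsSuccLimit θ →
      F θ = ⋂ (η : Ordinal.{0}) (_ : η < θ), F η)
    (hF0 : F 0 = Set.univ)
    (Fe : Ordinal.{0} → Set X)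
    (hFe : Fe = fun η => if η < lam then F η else ∅)
    (θ : Ordinal.{0}) (hθ : θ ≤ lam) (hθe : θ % 2 = 0) (x : X) :
    altSum (fun η => (Fe η).indicator fun _ => (1 : ℝ)) θ x =
      Set.indicator (⋃ (η : Ordinal.{0}) (_ : η < θ) (_ : η % 2 = 0),
        Fe η \ Fe (η + 1)) (fun _ => (1 : ℝ)) x :=
  stmt11_general lam F hdec Fe hFe θ hθe x

end
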